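/- arXiv:1710.10989 — 4 statements merged into one kernel-verified Lean document; each statement's English description precedes it below -/
import Mathlib

section
/- Let x₃ = 2/3 and define x₁ = x₃(1+√177)/88, x₂ = x₃(1+√177)/352, x₄ = (−271+29√177)/(315x₃), x₅ = 11(−1+√177)/(1260x₃), x₆ = 11(−9+√177)/(5040x₃), x₇ = (89−√177)/(5040x₃²), y₀ = 1, y₁ = 1, y₂ = (857−58√177)/630. Then for every square real matrix A, setting A₂ = A², A₄ = A₂(x₁A + x₂A₂), A₈ = (x₃A₂ + A₄)(x₄I + x₅A + x₆A₂ + x₇A₄), one has y₀I + y₁A + y₂A₂ + A₈ = ∑_{i=0}^{8} A^i/i!. -/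
/-! Every matrix in the identity is a polynomial in `A`, so it is an identity between polynomials
in one element of an `ℝ`-algebra. Expanding the two products gives a polynomial of degree 8 whose
coefficients are low-degree expressions in the `xᵢ`; for the given values they equal `1 / k!`
(for `k = 2` after adding `y₂`), using only `s ^ 2 = 177` for `s = √177`. The value of `x₃` is a
free scale: `x₁, x₂` are proportional to it and `x₄, …, x₇` inversely so, which cancels in every
coefficient. -/

open Finset

theorem three_product_expansion {R : Type*} [Ring R] [Algebra ℝ R] (a : R)
    (x1 x2 x3 x4 x5 x6 x7 : ℝ) :
    (x3 • a ^ 2 + a ^ 2 * (x1 • a + x2 • a ^ 2)) *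
        (x4 • (1 : R) + x5 • a + x6 • a ^ 2 + x7 • (a ^ 2 * (x1 • a + x2 • a ^ 2))) =
      (x3 * x4) • a ^ 2 + (x3 * x5 + x1 * x4) • a ^ 3 + (x3 * x6 + x1 * x5 + x2 * x4) • a ^ 4 +
        (x1 * x3 * x7 + x1 * x6 + x2 * x5) • a ^ 5 +
        (x2 * x3 * x7 + x1 ^ 2 * x7 + x2 * x6) • a ^ 6 + (2 * x1 * x2 * x7) • a ^ 7 +
        (x2 ^ 2 * x7) • a ^ 8 := by
  simp only [mul_add, add_mul, smul_mul_assoc, mul_smul_comm, mul_one, ← pow_succ, ← pow_add]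
  module

theorem taylor8_coefficients {s x3 : ℝ} (x1 x2 x4 x5 x6 x7 y2 : ℝ) (hs : s ^ 2 = 177)
    (hx3 : x3 ≠ 0) (hx1 : x1 = x3 * (1 + s) / 88) (hx2 : x2 = x3 * (1 + s) / 352)
    (hx4 : x4 = (-271 + 29 * s) / (315 * x3)) (hx5 : x5 = 11 * (-1 + s) / (1260 * x3))
    (hx6 : x6 = 11 * (-9 + s) / (5040 * x3)) (hx7 : x7 = (89 - s) / (5040 * x3 ^ 2))
    (hy2 : y2 = (857 - 58 * s) / 630) :
    x3 * x4 + y2 = 1 / 2 ∧ x3 * x5 + x1 * x4 = 1 / 6 ∧ x3 * x6 + x1 * x5 + x2 * x4 = 1 / 24 ∧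
      x1 * x3 * x7 + x1 * x6 + x2 * x5 = 1 / 120 ∧
      x2 * x3 * x7 + x1 ^ 2 * x7 + x2 * x6 = 1 / 720 ∧
      2 * x1 * x2 * x7 = 1 / 5040 ∧ x2 ^ 2 * x7 = 1 / 40320 := by
  subst hx1 hx2 hx4 hx5 hx6 hx7 hy2
  refine ⟨?_, ?_, ?_, ?_, ?_, ?_, ?_⟩ <;> field_simp
  · ring
  · linear_combination 219240 * hs
  · linear_combination 536481792000 * hs
  · linear_combination 1117670400 * hs
  · linear_combination (77806080 - 253440 * s) * hs
  · linear_combination (174 - 2 * s) * hs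
  · linear_combination (3507840 - 40320 * s) * hs

theorem taylor8_three_products (n : ℕ) (A : Matrix (Fin n) (Fin n) ℝ) :
    let x3 : ℝ := 2/3
    let x1 : ℝ := x3 * (1 + Real.sqrt 177) / 88
    let x2 : ℝ := x3 * (1 + Real.sqrt 177) / 352
    let x4 : ℝ := (-271 + 29 * Real.sqrt 177) / (315 * x3)
    let x5 : ℝ := 11 * (-1 + Real.sqrt 177) / (1260 * x3)
    let x6 : ℝ := 11 * (-9 + Real.sqrt 177) / (5040 * x3)
    let x7 : ℝ := (89 - Real.sqrt 177) / (5040 * x3 ^ 2)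
    let y0 : ℝ := 1
    let y1 : ℝ := 1
    let y2 : ℝ := (857 - 58 * Real.sqrt 177) / 630
    let A2 := A ^ 2
    let A4 := A2 * (x1 • A + x2 • A2)
    let A8 := (x3 • A2 + A4) *
      (x4 • (1 : Matrix (Fin n) (Fin n) ℝ) + x5 • A + x6 • A2 + x7 • A4)
    y0 • (1 : Matrix (Fin n) (Fin n) ℝ) + y1 • A + y2 • A2 + A8
      = ∑ i ∈ Finset.range 9, ((Nat.factorial i : ℝ))⁻¹ • A ^ i := by
  intro x3 x1 x2 x4 x5 x6 x7 y0 y1 y2 A2 A4 A8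
  obtain ⟨h2, h3, h4, h5, h6, h7, h8⟩ := taylor8_coefficients x1 x2 x4 x5 x6 x7 y2
    (Real.sq_sqrt (by norm_num)) (by norm_num [x3] : x3 ≠ 0) rfl rfl rfl rfl rfl rfl rfl
  rw [show A8 = _ from three_product_expansion A x1 x2 x3 x4 x5 x6 x7]
  simp only [sum_range_succ, sum_range_zero, Nat.factorial, pow_zero, pow_one, y0, y1, A2]
  linear_combination (norm := module) h2 • A ^ 2 + h3 • A ^ 3 + h4 • A ^ 4 + h5 • A ^ 5 +
    h6 • A ^ 6 + h7 • A ^ 7 + h8 • A ^ 8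
end

section
/- For the diagonal Padé numerator p_m(x) = ∑_{j=0}^m [(2m−j)! m! / ((2m)! (m−j)! j!)] x^j, the function r_{2m}(x) = p_m(x)/p_m(−x) satisfies r_{2m}(x) − e^x = O(x^{2m+1}) as x → 0; equivalently, the first 2m+1 Taylor coefficients of p_m(x) − e^x p_m(−x) at 0 vanish. -/
/-!
Write the coefficients of `p_m` as `a_j = C(2m-j, m) / (C(2m, m) j!)`; this vanishes for
`m < j ≤ 2m`, so the truncation of the sum at `m` is invisible below degree `2m + 1`. Since
`1 / (j! (k-j)!) = C(k, j) / k!`, the coefficient of `x^k` in `e^x p_m(-x)` is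
`(∑_j (-1)^j C(k, j) C(2m-j, m)) / (C(2m, m) k!)`, and for `k ≤ 2m` the alternating sum is
`C(2m-k, m)`, the coefficient of `X^m` in `(X+1)^(2m-k) = (X+1)^(2m-k) (-X + (X+1))^k`.
-/

open Polynomial PowerSeries

open scoped Nat

namespace Polynomial

theorem _root_.Int.alternating_sum_choose_mul_choose_sub {k n s : ℕ} (hk : k ≤ n) (hs : s ≤ n) :
    ∑ j ∈ Finset.range (k + 1), (-1 : ℤ) ^ j * k.choose j * (n - j).choose s =
      (n - k).choose (n - s) := by
  have hsplit : ((X + 1) ^ (n - k) : ℤ[X]) =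
      ∑ j ∈ Finset.range (k + 1), C ((-1) ^ j * (k.choose j : ℤ)) * (X ^ j * (X + 1) ^ (n - j)) := by
    calc ((X + 1) ^ (n - k) : ℤ[X]) = (-X + (X + 1)) ^ k * (X + 1) ^ (n - k) := by ring
      _ = _ := by
        rw [add_pow, Finset.sum_mul]
        refine Finset.sum_congr rfl fun j hj => ?_
        have hjk : j ≤ k := Finset.mem_range_succ_iff.mp hj
        rw [show n - j = (k - j) + (n - k) by omega, pow_add, neg_pow]
        simp only [map_mul, map_pow, map_neg, map_one, map_natCast]
        ring
  have hcoeff := congrArg (coeff · (n - s)) hsplit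
  simp only [coeff_X_add_one_pow, finsetSum_coeff, coeff_C_mul, coeff_X_pow_mul'] at hcoeff
  rw [hcoeff]
  refine Finset.sum_congr rfl fun j hj => ?_
  have hjk : j ≤ k := Finset.mem_range_succ_iff.mp hj
  split_ifs with hjs
  · rw [Nat.choose_symm_of_eq_add (show n - j = (n - s - j) + s by omega)]
  · rw [Nat.choose_eq_zero_of_lt (show n - j < s by omega)]
    simp

theorem coeff_comp_neg_X {R : Type*} [CommRing R] (f : R[X]) (n : ℕ) :
    (f.comp (-X)).coeff n = (-1) ^ n * f.coeff n := by
  rw [← neg_one_mul (X : R[X]), ← C_1, ← C_neg, comp_C_mul_X_coeff, mul_comm]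

end Polynomial

variable {K : Type*} [Field K] [CharZero K]

theorem PowerSeries.coeff_exp_mul_comp_neg_X (f : K[X]) (k : ℕ) :
    coeff k (exp K * (f.comp (-Polynomial.X) : K⟦X⟧)) =
      ∑ j ∈ Finset.range (k + 1), (-1) ^ j * f.coeff j / (k - j)! := by
  rw [mul_comm, coeff_mul, Finset.Nat.sum_antidiagonal_eq_sum_range_succ_mk]
  refine Finset.sum_congr rfl fun j _ => ?_
  simp [Polynomial.coeff_coe, Polynomial.coeff_comp_neg_X, coeff_exp, div_eq_mul_inv]

variable (K) in
noncomputable def padeNumerator (m : ℕ) : K[X] :=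
  ∑ j ∈ Finset.range (m + 1),
    Polynomial.C (((2 * m - j)! * m ! : K) / ((2 * m)! * (m - j)! * j !)) * Polynomial.X ^ j

theorem coeff_padeNumerator {m j : ℕ} (hj : j ≤ 2 * m) :
    (padeNumerator K m).coeff j = (2 * m - j).choose m / ((2 * m).choose m * j !) := by
  simp only [padeNumerator, finsetSum_coeff, Polynomial.coeff_C_mul_X_pow, Finset.sum_ite_eq,
    Finset.mem_range_succ_iff]
  split_ifs with hjm
  · rw [Nat.cast_choose K (show m ≤ 2 * m - j by omega), Nat.cast_choose K (show m ≤ 2 * m by omega),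
      show 2 * m - j - m = m - j by omega, show 2 * m - m = m by omega]
    field_simp
  · rw [Nat.choose_eq_zero_of_lt (show 2 * m - j < m by omega)]
    simp

theorem coeff_padeNumerator_sub_exp_mul_comp_neg_X {m k : ℕ} (hk : k ≤ 2 * m) :
    coeff k ((padeNumerator K m : K⟦X⟧) -
      exp K * ((padeNumerator K m).comp (-Polynomial.X) : K⟦X⟧)) = 0 := by
  have hterm : ∀ j ∈ Finset.range (k + 1),
      (-1) ^ j * (padeNumerator K m).coeff j / (k - j)! =
        ((-1) ^ j * k.choose j * (2 * m - j).choose m : K) / ((2 * m).choose m * k !) := by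
    intro j hj
    have hjk : j ≤ k := Finset.mem_range_succ_iff.mp hj
    rw [coeff_padeNumerator (hjk.trans hk), Nat.cast_choose K hjk]
    field_simp
    exact (mul_div_mul_right _ _ (Nat.cast_ne_zero.mpr k.factorial_ne_zero)).symm
  have halt : ∑ j ∈ Finset.range (k + 1), ((-1) ^ j * k.choose j * (2 * m - j).choose m : K) =
      (2 * m - k).choose m := by
    have := Int.alternating_sum_choose_mul_choose_sub hk (show m ≤ 2 * m by omega)
    rw [show 2 * m - m = m by omega] at this
    exact_mod_cast this
  rw [map_sub, coeff_exp_mul_comp_neg_X, Polynomial.coeff_coe, Finset.sum_congr rfl hterm,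
    ← Finset.sum_div, halt, coeff_padeNumerator hk, sub_self]

theorem pade_order_general (m : ℕ) :
    let p : ℝ[X] := ∑ j ∈ Finset.range (m + 1),
      Polynomial.C ((Nat.factorial (2 * m - j) * Nat.factorial m : ℝ) /
        (Nat.factorial (2 * m) * Nat.factorial (m - j) * Nat.factorial j)) * Polynomial.X ^ j
    ∀ k ≤ 2 * m,
      (PowerSeries.coeff k)
        ((p : PowerSeries ℝ) - PowerSeries.exp ℝ * ((p.comp (-Polynomial.X) : ℝ[X]) : PowerSeries ℝ)) = 0 := by
  intro _ _ hk
  exact coeff_padeNumerator_sub_exp_mul_comp_neg_X hk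

theorem pade_order (m : ℕ) (hm : 0 < m) :
    let p : ℝ[X] := ∑ j ∈ Finset.range (m + 1),
      Polynomial.C ((Nat.factorial (2 * m - j) * Nat.factorial m : ℝ) /
        (Nat.factorial (2 * m) * Nat.factorial (m - j) * Nat.factorial j)) * Polynomial.X ^ j
    ∀ k ≤ 2 * m,
      (PowerSeries.coeff k)
        ((p : PowerSeries ℝ) - PowerSeries.exp ℝ * ((p.comp (-Polynomial.X) : ℝ[X]) : PowerSeries ℝ)) = 0 :=
  pade_order_general m
end

section
/- For any square real matrix A, with A₂ = A², A₄ = A₂², A₆ = A₂A₄, b_j = (26−j)!·13!/(26!·(13−j)!·j!), u₁₃ = A(A₆(b₁₃A₆ + b₁₁A₄ + b₉A₂) + b₇A₆ + b₅A₄ + b₃A₂ + b₁I) and v₁₃ = A₆(b₁₂A₆ + b₁₀A₄ + b₈A₂) + b₆A₆ + b₄A₄ + b₂A₂ + b₀I, one has u₁₃ + v₁₃ = p₁₃(A) and −u₁₃ + v₁₃ = p₁₃(−A), where p₁₃(x) = ∑_{j=0}^{13} b_j x^j. -/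
set_option maxRecDepth 8000 in
theorem pade26_even_odd_split (n : ℕ) (A : Matrix (Fin n) (Fin n) ℝ) :
    let b : ℕ → ℝ := fun j => (Nat.factorial (26 - j) * Nat.factorial 13 : ℝ) /
      (Nat.factorial 26 * Nat.factorial (13 - j) * Nat.factorial j)
    let A2 := A ^ 2
    let A4 := A2 ^ 2
    let A6 := A2 * A4
    let u13 := A * (A6 * (b 13 • A6 + b 11 • A4 + b 9 • A2) +
      b 7 • A6 + b 5 • A4 + b 3 • A2 + b 1 • (1 : Matrix (Fin n) (Fin n) ℝ))
    let v13 := A6 * (b 12 • A6 + b 10 • A4 + b 8 • A2) +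
      b 6 • A6 + b 4 • A4 + b 2 • A2 + b 0 • (1 : Matrix (Fin n) (Fin n) ℝ)
    u13 + v13 = ∑ j ∈ Finset.range 14, b j • A ^ j ∧
    -u13 + v13 = ∑ j ∈ Finset.range 14, b j • (-A) ^ j := by
  intro b A2 A4 A6 u13 v13
  constructor
  · simp only [Finset.sum_range_succ, Finset.sum_range_zero, u13, v13, A6, A4, A2,
      mul_smul_comm, smul_smul]
    noncomm_ring
  · simp only [Finset.sum_range_succ, Finset.sum_range_zero, u13, v13, A6, A4, A2,
      pow_succ, pow_zero, one_mul, mul_neg, neg_mul, neg_neg, smul_neg,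
      mul_smul_comm, smul_smul]
    noncomm_ring
end

section
/- There exist real coefficients a_{i,j} (i = 0,…,3; j = 1,…,4) such that for every square real matrix A, setting A₂ = A², A₃ = A₂A, B_j = a_{0,j}I + a_{1,j}A + a_{2,j}A₂ + a_{3,j}A₃ for j = 1,…,4, A₆ = B₃ + B₄², the expression B₁ + (B₂ + A₆)A₆ equals ∑_{i=0}^{12} A^i/i!. -/
theorem taylor12_four_products :
    ∃ a : Fin 4 → Fin 4 → ℝ, ∀ (n : ℕ) (A : Matrix (Fin n) (Fin n) ℝ),
      let A2 := A ^ 2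
      let A3 := A2 * A
      let B : Fin 4 → Matrix (Fin n) (Fin n) ℝ := fun j =>
        a 0 j • (1 : Matrix (Fin n) (Fin n) ℝ) + a 1 j • A + a 2 j • A2 + a 3 j • A3
      let A6 := B 2 + (B 3) ^ 2
      B 0 + (B 1 + A6) * A6 = ∑ i ∈ Finset.range 13, ((Nat.factorial i : ℝ))⁻¹ • A ^ i := by
  set w : ℝ := Real.sqrt 66 with hwdef
  set c : ℝ := Real.sqrt (Real.sqrt ((479001600:ℝ)⁻¹)) with hcdef
  have hw2 : w^2 = 66 := Real.sq_sqrt (by norm_num)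
  have hc4 : c^4 = (479001600:ℝ)⁻¹ := by
    have h1 : c^2 = Real.sqrt ((479001600:ℝ)⁻¹) := Real.sq_sqrt (Real.sqrt_nonneg _)
    have h2 : (c^2)^2 = (479001600:ℝ)⁻¹ := by rw [h1]; exact Real.sq_sqrt (by norm_num)
    nlinarith [h2]
  have hw3 : w^3 = 66*w := by rw [pow_succ, hw2]
  have hw4 : w^4 = 4356 := by rw [show w^4 = (w^2)^2 by ring, hw2]; norm_num
  refine ⟨fun i j => ![
      ![1, 119088*c^2, 0, 0],
      ![-118373/46200 + 57063/123200*w, 3726*w*c^2, (14328-1863*w)*c^2, 39/2*c],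
      ![-23069/268800, 0, 8703/4*c^2, 3*c],
      ![-124/1575 + 827/277200*w, 24*w*c^2, (255-12*w)*c^2, c]] i j, ?_⟩
  intro n A
  dsimp only
  simp only [Matrix.cons_val_zero, Matrix.cons_val_one, Matrix.head_cons,
    Matrix.cons_val_two, Matrix.cons_val_three, Matrix.tail_cons]
  simp only [Finset.sum_range_succ, Finset.sum_range_zero, Nat.factorial]
  norm_num only
  simp only [pow_succ, pow_zero, one_mul, mul_one, smul_add, add_mul, mul_add,
    smul_mul_assoc, mul_smul_comm, smul_smul, mul_assoc, zero_add, add_zero,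
    zero_smul, smul_zero, zero_mul, mul_zero, one_smul]
  match_scalars
  all_goals (try ring_nf; try simp only [hw2, hw3, hw4, hc4]; try ring_nf; try norm_num)
end
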